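/- Stability of smoothing/prediction distributions (Lemma 4.6): For every R > 0 there exists a constant C > 0, depending only on R, ρ, N, B, m₁ and the norms ‖L_k‖_{L²(μ_prior)}, such that for every 1 ≤ j ≤ N, every τ ∈ [0,T], and all y_{1:j}, y'_{1:j} ∈ (ℝ^d)^j with (Σ_{k=1}^j |y_k|_Γ²)^{1/2} ≤ R and (Σ_{k=1}^j |y'_k|_Γ²)^{1/2} ≤ R, one has W1(ν^{y_{1:j}}_τ, ν^{y'_{1:j}}_τ) ≤ C (Σ_{k=1}^j |y_k − y'_k|_Γ²)^{1/2}; consequently, for every t, δt ≥ 0 with t + δt ≤ T, ∫_t^{t+δt} W1(ν^{y_{1:j}}_τ, ν^{y'_{1:j}}_τ) dτ ≤ C · δt · (Σ_{k=1}^j |y_k − y'_k|_Γ²)^{1/2}. -/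

import Mathlib

/-!
The unnormalised posterior densities `g_y = ∏_{k<j} ρ (y_k - L_k)` are bounded by
`max 1 C_b ^ N`, and telescoping the product shows that `y ↦ g_y u` is Lipschitz, uniformly
in `u`. The normalising constants `Z_y = ∫ g_y` are bounded below uniformly for `|y| ≤ R`:
the Gaussian tail bound (N.3) with `|a - b|²_Γ ≤ 2|a|²_Γ + 2|b|²_Γ` gives
`g_y ≥ c e^{-R²} e^{-Σ_k |L_k|²_Γ}`, and Jensen's inequality for `exp` bounds the integral
of the last factor below by `e^{-Σ_k ‖L_k‖²_{L²}}`. Hence the normalised densities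
`g_y / Z_y` differ pointwise by a constant times `|y - y'|`. A 1-Lipschitz test function `Φ`
with `Φ 0 = 0` satisfies `|Φ (S_τ u)| ≤ B ‖u‖`, so each term of the dual formula for `W1`
is at most that constant times `B m₁ |y - y'|`; integrating over `τ` gives the second claim.
-/

open MeasureTheory
open scoped BigOperators ENNReal Matrix

noncomputable section

/-- The Γ-weighted norm `|y|_Γ = sqrt ⟨y, Γ⁻¹ y⟩` on `ℝ^d`. -/
def gammaNorm {d : ℕ} (Γ : Matrix (Fin d) (Fin d) ℝ) (y : Fin d → ℝ) : ℝ :=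
  Real.sqrt (y ⬝ᵥ (Γ⁻¹).mulVec y)

/-- The Γ-norm of a tuple of measurements: `(Σ_k |y_k|_Γ²)^{1/2}`. -/
def gammaNormTuple {d N : ℕ} (Γ : Matrix (Fin d) (Fin d) ℝ) (y : Fin N → Fin d → ℝ) : ℝ :=
  Real.sqrt (∑ k, (gammaNorm Γ (y k)) ^ 2)

/-- A noise density satisfying (N.1)–(N.3). -/
structure IsNoiseDensity {d : ℕ} (Γ : Matrix (Fin d) (Fin d) ℝ) (ρ : (Fin d → ℝ) → ℝ)
    (Lρ Cb Ct : ℝ) : Prop where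
  Lρ_pos : 0 < Lρ
  Cb_pos : 0 < Cb
  Ct_pos : 0 < Ct
  pos : ∀ y, 0 < ρ y
  lip : ∀ y y', |ρ y - ρ y'| ≤ Lρ * gammaNorm Γ (y - y')
  bdd : ∀ y, ρ y ≤ Cb
  tail : ∀ y, Ct⁻¹ * Real.exp (-(1 / 2) * (gammaNorm Γ y) ^ 2) ≤ ρ y

/-- Wasserstein-1 distance in Kantorovich–Rubinstein dual form. -/
def W1 {X : Type*} [NormedAddCommGroup X] [MeasurableSpace X] (μ ν : Measure X) : ℝ :=
  sSup {r : ℝ | ∃ Φ : X → ℝ, LipschitzWith 1 Φ ∧ Φ 0 = 0 ∧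
    r = (∫ u, Φ u ∂μ) - ∫ u, Φ u ∂ν}

/-- Unnormalized posterior density given the first `k` measurements. -/
def postDensity {X : Type*} {d N : ℕ} (ρ : (Fin d → ℝ) → ℝ)
    (L : Fin N → X → Fin d → ℝ) (y : Fin N → Fin d → ℝ) (k : ℕ) (u : X) : ℝ :=
  ∏ j ∈ Finset.univ.filter (fun j : Fin N => (j : ℕ) < k), ρ (y j - L j u)

/-- Normalization constant `Z_k(y_{1:k})`. -/
def postZ {X : Type*} [MeasurableSpace X] {d N : ℕ} (μp : Measure X) (ρ : (Fin d → ℝ) → ℝ)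
    (L : Fin N → X → Fin d → ℝ) (y : Fin N → Fin d → ℝ) (k : ℕ) : ℝ :=
  ∫ u, postDensity ρ L y k u ∂μp

/-- Bayesian posterior `μ^{y_{1:k}}` on the initial data. -/
def posteriorK {X : Type*} [MeasurableSpace X] {d N : ℕ} (μp : Measure X)
    (ρ : (Fin d → ℝ) → ℝ) (L : Fin N → X → Fin d → ℝ) (y : Fin N → Fin d → ℝ) (k : ℕ) :
    Measure X :=
  μp.withDensity fun u => ENNReal.ofReal (postDensity ρ L y k u / postZ μp ρ L y k)

/-- The number of measurement times `t_j` (j = 1, …, N) with `t_j ≤ t`; for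
`t ∈ [t_k, t_{k+1})` this equals `k`, and it equals `N` for `t = t_N = T`. -/
def numObs {N : ℕ} (ts : Fin (N + 1) → ℝ) (t : ℝ) : ℕ :=
  (Finset.univ.filter (fun j : Fin N => ts j.succ ≤ t)).card

/-- The filtering distribution `ν^y_t = (S_t)_# μ^{y_{1:k}}` for `t ∈ [t_k, t_{k+1})`. -/
def filteringDist {X : Type*} [MeasurableSpace X] {d N : ℕ} (μp : Measure X)
    (ρ : (Fin d → ℝ) → ℝ) (ts : Fin (N + 1) → ℝ) (S : ℝ → X → X)
    (L : Fin N → X → Fin d → ℝ) (y : Fin N → Fin d → ℝ) (t : ℝ) : Measure X :=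
  (posteriorK μp ρ L y (numObs ts t)).map (S t)

lemma abs_prod_sub_prod_le {ι : Type*} (s : Finset ι) {f g : ι → ℝ} {M : ℝ} (hM : 1 ≤ M)
    (hf : ∀ i ∈ s, |f i| ≤ M) (hg : ∀ i ∈ s, |g i| ≤ M) :
    |∏ i ∈ s, f i - ∏ i ∈ s, g i| ≤ M ^ s.card * ∑ i ∈ s, |f i - g i| := by
  classical
  induction s using Finset.induction_on with
  | empty => simp
  | insert a s ha ih =>
    have ih := ih (fun i hi => hf i (s.mem_insert_of_mem hi))
      (fun i hi => hg i (s.mem_insert_of_mem hi))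
    have hga := hg a (s.mem_insert_self a)
    have hprod : |∏ i ∈ s, f i| ≤ M ^ s.card := by
      rw [Finset.abs_prod, ← Finset.prod_const]
      exact Finset.prod_le_prod (fun _ _ => abs_nonneg _)
        fun i hi => hf i (s.mem_insert_of_mem hi)
    rw [Finset.prod_insert ha, Finset.prod_insert ha, Finset.sum_insert ha,
      Finset.card_insert_of_notMem ha, pow_succ]
    have hMs : 0 ≤ M ^ s.card := by positivity
    calc |f a * ∏ i ∈ s, f i - g a * ∏ i ∈ s, g i|
        = |(f a - g a) * ∏ i ∈ s, f i + g a * (∏ i ∈ s, f i - ∏ i ∈ s, g i)| := by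
          ring_nf
      _ ≤ |f a - g a| * M ^ s.card + M * (M ^ s.card * ∑ i ∈ s, |f i - g i|) := by
        refine (abs_add_le _ _).trans ?_
        rw [abs_mul, abs_mul]
        gcongr
      _ ≤ M ^ s.card * M * (|f a - g a| + ∑ i ∈ s, |f i - g i|) := by
        nlinarith [mul_le_mul_of_nonneg_left hM (mul_nonneg (abs_nonneg (f a - g a)) hMs)]

lemma continuous_of_abs_sub_le {E : Type*} [TopologicalSpace E] [AddGroup E]
    [IsTopologicalAddGroup E] {f g : E → ℝ} {K : ℝ} (hg : Continuous g) (hg0 : g 0 = 0)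
    (h : ∀ x x', |f x - f x'| ≤ K * g (x - x')) : Continuous f := by
  refine continuous_iff_continuousAt.2 fun x => tendsto_iff_norm_sub_tendsto_zero.2 ?_
  have hK : Filter.Tendsto (fun x' => K * g (x' - x)) (nhds x) (nhds 0) := by
    have hc : Continuous fun x' => K * g (x' - x) := by fun_prop
    simpa [hg0] using hc.tendsto x
  exact squeeze_zero (fun _ => norm_nonneg _) (fun x' => h x' x) hK

lemma abs_div_sub_div_le {a a' Z Z' z M δ η : ℝ} (hz : 0 < z) (hZ : z ≤ Z) (hZ' : z ≤ Z')
    (ha' : |a'| ≤ M) (ha : |a - a'| ≤ δ) (hZZ : |Z - Z'| ≤ η) :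
    |a / Z - a' / Z'| ≤ δ / z + M * η / (z * z) := by
  have hZpos : 0 < Z := hz.trans_le hZ
  have hZ'pos : 0 < Z' := hz.trans_le hZ'
  have hsplit : a / Z - a' / Z' = (a - a') / Z + a' * (Z' - Z) / (Z * Z') := by
    field_simp
    ring
  rw [hsplit]
  refine (abs_add_le _ _).trans (add_le_add ?_ ?_)
  · rw [abs_div, abs_of_pos hZpos]
    exact div_le_div₀ ((abs_nonneg _).trans ha) ha hz hZ
  · rw [abs_div, abs_mul, abs_of_pos (mul_pos hZpos hZ'pos), abs_sub_comm]
    exact div_le_div₀ (mul_nonneg ((abs_nonneg _).trans ha') ((abs_nonneg _).trans hZZ))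
      (mul_le_mul ha' hZZ (abs_nonneg _) ((abs_nonneg _).trans ha')) (mul_pos hz hz)
      (mul_le_mul hZ hZ' hz.le hZpos.le)

lemma exp_integral_le_integral_exp {Ω : Type*} [MeasurableSpace Ω] {μ : Measure Ω}
    [IsProbabilityMeasure μ] {f : Ω → ℝ} (hf : Integrable f μ)
    (hexp : Integrable (fun ω => Real.exp (f ω)) μ) :
    Real.exp (∫ ω, f ω ∂μ) ≤ ∫ ω, Real.exp (f ω) ∂μ :=
  convexOn_exp.map_integral_le Real.continuous_exp.continuousOn isClosed_univ
    (ae_of_all _ fun _ => Set.mem_univ _) hf hexp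

lemma intervalIntegral_le_of_le_const {f : ℝ → ℝ} {a b c : ℝ} (hab : a ≤ b) (hc : 0 ≤ c)
    (hf : ∀ x ∈ Set.Icc a b, f x ≤ c) : ∫ x in a..b, f x ≤ c * (b - a) := by
  by_cases hint : IntervalIntegrable f volume a b
  · simpa [mul_comm] using intervalIntegral.integral_mono_on hab hint intervalIntegrable_const hf
  · rw [intervalIntegral.integral_undef hint]
    exact mul_nonneg hc (sub_nonneg.2 hab)

lemma abs_le_norm_of_lipschitzWith_one {E : Type*} [SeminormedAddCommGroup E] {Φ : E → ℝ}
    (hΦ : LipschitzWith 1 Φ) (hΦ0 : Φ 0 = 0) (x : E) : |Φ x| ≤ ‖x‖ := by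
  simpa [hΦ0, Real.dist_eq] using hΦ.dist_le_mul x 0

lemma integral_map_withDensity_ofReal {X : Type*} [MeasurableSpace X] {μ : Measure X}
    {f : X → ℝ} (hf : Measurable f) (hf0 : ∀ u, 0 ≤ f u) {S : X → X} (hS : Measurable S)
    {Φ : X → ℝ} (hΦ : Measurable Φ) :
    ∫ v, Φ v ∂(μ.withDensity fun u => ENNReal.ofReal (f u)).map S
      = ∫ u, f u * Φ (S u) ∂μ := by
  rw [integral_map hS.aemeasurable hΦ.aestronglyMeasurable,
    integral_withDensity_eq_integral_toReal_smul (by fun_prop)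
      (ae_of_all _ fun _ => ENNReal.ofReal_lt_top)]
  simp only [ENNReal.toReal_ofReal (hf0 _), smul_eq_mul]

lemma W1_map_withDensity_le {X : Type*} [NormedAddCommGroup X] [MeasurableSpace X]
    [OpensMeasurableSpace X] {μ : Measure X} (hmom : Integrable (fun u => ‖u‖) μ)
    {f g : X → ℝ} (hfm : Measurable f) (hgm : Measurable g) {c ε B : ℝ}
    (hf : ∀ u, 0 ≤ f u ∧ f u ≤ c) (hg : ∀ u, 0 ≤ g u ∧ g u ≤ c)
    (hfg : ∀ u, |f u - g u| ≤ ε)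
    {S : X → X} (hS : Measurable S) (hSB : ∀ u, ‖S u‖ ≤ B * ‖u‖) :
    W1 ((μ.withDensity fun u => ENNReal.ofReal (f u)).map S)
        ((μ.withDensity fun u => ENNReal.ofReal (g u)).map S)
      ≤ ε * B * ∫ u, ‖u‖ ∂μ := by
  refine csSup_le ⟨0, fun _ => 0, LipschitzWith.const' 0, rfl, by simp⟩ ?_
  rintro _ ⟨Φ, hΦ, hΦ0, rfl⟩
  have hΦm : Measurable Φ := hΦ.continuous.measurable
  have hΦS : ∀ u, |Φ (S u)| ≤ B * ‖u‖ := fun u =>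
    (abs_le_norm_of_lipschitzWith_one hΦ hΦ0 (S u)).trans (hSB u)
  have hint : ∀ h : X → ℝ, Measurable h → (∀ u, 0 ≤ h u ∧ h u ≤ c) →
      Integrable (fun u => h u * Φ (S u)) μ := fun h hm hh =>
    (hmom.const_mul (c * B)).mono' (hm.mul (hΦm.comp hS)).aestronglyMeasurable
      (ae_of_all _ fun u => by
        rw [norm_mul, Real.norm_of_nonneg (hh u).1, Real.norm_eq_abs, mul_assoc]
        exact mul_le_mul (hh u).2 (hΦS u) (abs_nonneg _) ((hh u).1.trans (hh u).2))
  rw [integral_map_withDensity_ofReal hfm (fun u => (hf u).1) hS hΦm,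
    integral_map_withDensity_ofReal hgm (fun u => (hg u).1) hS hΦm,
    ← integral_sub (hint f hfm hf) (hint g hgm hg), ← integral_const_mul]
  refine integral_mono ((hint f hfm hf).sub (hint g hgm hg)) (hmom.const_mul _) fun u => ?_
  calc f u * Φ (S u) - g u * Φ (S u) ≤ |f u - g u| * |Φ (S u)| := by
        rw [← sub_mul, ← abs_mul]
        exact le_abs_self _
    _ ≤ ε * (B * ‖u‖) :=
        mul_le_mul (hfg u) (hΦS u) (abs_nonneg _) ((abs_nonneg _).trans (hfg u))
    _ = ε * B * ‖u‖ := by ring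

section GammaNorm

variable {d : ℕ} {Γ : Matrix (Fin d) (Fin d) ℝ}

lemma continuous_gammaNorm (Γ : Matrix (Fin d) (Fin d) ℝ) : Continuous (gammaNorm Γ) := by
  unfold gammaNorm dotProduct Matrix.mulVec
  fun_prop

lemma gammaNorm_zero (Γ : Matrix (Fin d) (Fin d) ℝ) : gammaNorm Γ 0 = 0 := by
  simp [gammaNorm]

lemma sq_gammaNorm (hΓ : Γ.PosDef) (y : Fin d → ℝ) :
    gammaNorm Γ y ^ 2 = y ⬝ᵥ Γ⁻¹ *ᵥ y :=
  Real.sq_sqrt (by simpa using hΓ.inv.posSemidef.dotProduct_mulVec_nonneg y)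

lemma sq_gammaNorm_sub_le (hΓ : Γ.PosDef) (a b : Fin d → ℝ) :
    gammaNorm Γ (a - b) ^ 2 ≤ 2 * gammaNorm Γ a ^ 2 + 2 * gammaNorm Γ b ^ 2 := by
  have hsum := sq_nonneg (gammaNorm Γ (a + b))
  rw [sq_gammaNorm hΓ] at hsum ⊢
  rw [sq_gammaNorm hΓ, sq_gammaNorm hΓ]
  simp only [Matrix.mulVec_add, Matrix.mulVec_sub, dotProduct_add, dotProduct_sub,
    add_dotProduct, sub_dotProduct] at hsum ⊢
  linarith

end GammaNorm

lemma IsNoiseDensity.continuous {d : ℕ} {Γ : Matrix (Fin d) (Fin d) ℝ}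
    {ρ : (Fin d → ℝ) → ℝ} {Lρ Cb Ct : ℝ} (hρ : IsNoiseDensity Γ ρ Lρ Cb Ct) :
    Continuous ρ :=
  continuous_of_abs_sub_le (continuous_gammaNorm Γ) (gammaNorm_zero Γ) hρ.lip

lemma card_filter_lt_le (N j : ℕ) :
    (Finset.univ.filter (fun k : Fin N => (k : ℕ) < j)).card ≤ N :=
  (Finset.card_filter_le _ _).trans_eq (Finset.card_fin N)

section Posterior

variable {X : Type*} {d N : ℕ} {Γ : Matrix (Fin d) (Fin d) ℝ}
  {ρ : (Fin d → ℝ) → ℝ} {Lρ Cb Ct : ℝ} {L : Fin N → X → Fin d → ℝ}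

lemma measurable_postDensity [MeasurableSpace X] (hρ : Measurable ρ)
    (hL : ∀ k, Measurable (L k)) (y : Fin N → Fin d → ℝ) (j : ℕ) :
    Measurable (postDensity ρ L y j) :=
  Finset.measurable_prod _ fun k _ => hρ.comp (measurable_const.sub (hL k))

lemma postDensity_pos (hρ : IsNoiseDensity Γ ρ Lρ Cb Ct) (y : Fin N → Fin d → ℝ) (j : ℕ)
    (u : X) : 0 < postDensity ρ L y j u :=
  Finset.prod_pos fun _ _ => hρ.pos _

lemma postDensity_le (hρ : IsNoiseDensity Γ ρ Lρ Cb Ct) (y : Fin N → Fin d → ℝ) (j : ℕ)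
    (u : X) : postDensity ρ L y j u ≤ max 1 Cb ^ N :=
  calc postDensity ρ L y j u
      ≤ max 1 Cb ^ (Finset.univ.filter (fun k : Fin N => (k : ℕ) < j)).card := by
        rw [← Finset.prod_const]
        exact Finset.prod_le_prod (fun _ _ => (hρ.pos _).le)
          fun _ _ => (hρ.bdd _).trans (le_max_right _ _)
    _ ≤ max 1 Cb ^ N := pow_le_pow_right₀ (le_max_left _ _) (card_filter_lt_le N j)

lemma integrable_postDensity [MeasurableSpace X] {μ : Measure X} [IsFiniteMeasure μ]
    (hρ : IsNoiseDensity Γ ρ Lρ Cb Ct) (hL : ∀ k, Measurable (L k))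
    (y : Fin N → Fin d → ℝ) (j : ℕ) : Integrable (postDensity ρ L y j) μ :=
  Integrable.of_bound (measurable_postDensity hρ.continuous.measurable hL y j).aestronglyMeasurable
    (max 1 Cb ^ N) (ae_of_all _ fun u => by
      rw [Real.norm_of_nonneg (postDensity_pos hρ y j u).le]
      exact postDensity_le hρ y j u)

lemma abs_postDensity_sub_le (hρ : IsNoiseDensity Γ ρ Lρ Cb Ct) (y y' : Fin N → Fin d → ℝ)
    (j : ℕ) (u : X) :
    |postDensity ρ L y j u - postDensity ρ L y' j u|
      ≤ Lρ * N * max 1 Cb ^ N *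
          √(∑ k ∈ Finset.univ.filter (fun k : Fin N => (k : ℕ) < j),
            gammaNorm Γ (y k - y' k) ^ 2) := by
  set F := Finset.univ.filter (fun k : Fin N => (k : ℕ) < j)
  set s := √(∑ k ∈ F, gammaNorm Γ (y k - y' k) ^ 2)
  have hM : 1 ≤ max 1 Cb := le_max_left _ _
  have hρM : ∀ z, |ρ z| ≤ max 1 Cb := fun z =>
    (abs_of_pos (hρ.pos z)).trans_le ((hρ.bdd z).trans (le_max_right _ _))
  have hfactor : ∀ k ∈ F, |ρ (y k - L k u) - ρ (y' k - L k u)| ≤ Lρ * s := by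
    intro k hk
    have hlip := hρ.lip (y k - L k u) (y' k - L k u)
    rw [sub_sub_sub_cancel_right] at hlip
    refine hlip.trans (mul_le_mul_of_nonneg_left ?_ hρ.Lρ_pos.le)
    exact Real.le_sqrt_of_sq_le
      (Finset.single_le_sum (f := fun i => gammaNorm Γ (y i - y' i) ^ 2)
        (fun _ _ => sq_nonneg _) hk)
  have hLs : 0 ≤ Lρ * s := mul_nonneg hρ.Lρ_pos.le (Real.sqrt_nonneg _)
  calc |postDensity ρ L y j u - postDensity ρ L y' j u|
      ≤ max 1 Cb ^ F.card * ∑ k ∈ F, |ρ (y k - L k u) - ρ (y' k - L k u)| :=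
        abs_prod_sub_prod_le F hM (fun _ _ => hρM _) (fun _ _ => hρM _)
    _ ≤ max 1 Cb ^ N * (N * (Lρ * s)) := by
        gcongr
        · exact card_filter_lt_le N j
        · calc ∑ k ∈ F, |ρ (y k - L k u) - ρ (y' k - L k u)| ≤ F.card * (Lρ * s) :=
                (Finset.sum_le_sum hfactor).trans_eq (by simp)
            _ ≤ N * (Lρ * s) := by gcongr; exact_mod_cast card_filter_lt_le N j
    _ = Lρ * N * max 1 Cb ^ N * s := by ring

lemma abs_postZ_sub_le [MeasurableSpace X] {μ : Measure X} [IsProbabilityMeasure μ]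
    (hρ : IsNoiseDensity Γ ρ Lρ Cb Ct) (hL : ∀ k, Measurable (L k))
    (y y' : Fin N → Fin d → ℝ) (j : ℕ) :
    |postZ μ ρ L y j - postZ μ ρ L y' j|
      ≤ Lρ * N * max 1 Cb ^ N *
          √(∑ k ∈ Finset.univ.filter (fun k : Fin N => (k : ℕ) < j),
            gammaNorm Γ (y k - y' k) ^ 2) := by
  rw [postZ, postZ, ← integral_sub (integrable_postDensity hρ hL y j)
    (integrable_postDensity hρ hL y' j)]
  refine abs_integral_le_integral_abs.trans ?_
  calc ∫ u, |postDensity ρ L y j u - postDensity ρ L y' j u| ∂μ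
      ≤ ∫ _, Lρ * N * max 1 Cb ^ N *
          √(∑ k ∈ Finset.univ.filter (fun k : Fin N => (k : ℕ) < j),
            gammaNorm Γ (y k - y' k) ^ 2) ∂μ :=
        integral_mono ((integrable_postDensity hρ hL y j).sub
          (integrable_postDensity hρ hL y' j)).abs (integrable_const _)
          fun u => abs_postDensity_sub_le hρ y y' j u
    _ = _ := by simp

lemma le_postDensity (hΓ : Γ.PosDef) (hρ : IsNoiseDensity Γ ρ Lρ Cb Ct)
    {y : Fin N → Fin d → ℝ} {j : ℕ} {R : ℝ}
    (hy : ∑ k ∈ Finset.univ.filter (fun k : Fin N => (k : ℕ) < j), gammaNorm Γ (y k) ^ 2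
      ≤ R ^ 2)
    (u : X) :
    min 1 Ct⁻¹ ^ N * Real.exp (-R ^ 2) * Real.exp (-∑ k, gammaNorm Γ (L k u) ^ 2)
      ≤ postDensity ρ L y j u := by
  set F := Finset.univ.filter (fun k : Fin N => (k : ℕ) < j)
  have hCt : 0 < Ct⁻¹ := inv_pos.2 hρ.Ct_pos
  have hm : 0 < min 1 Ct⁻¹ := lt_min one_pos hCt
  have hfactor : ∀ k ∈ F,
      Ct⁻¹ * Real.exp (-(gammaNorm Γ (y k) ^ 2 + gammaNorm Γ (L k u) ^ 2))
        ≤ ρ (y k - L k u) := fun k _ => by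
    refine le_trans (mul_le_mul_of_nonneg_left (Real.exp_le_exp.2 ?_) hCt.le) (hρ.tail _)
    linarith [sq_gammaNorm_sub_le hΓ (y k) (L k u)]
  have hcoef : min 1 Ct⁻¹ ^ N ≤ Ct⁻¹ ^ F.card :=
    (pow_le_pow_of_le_one hm.le (min_le_left _ _) (card_filter_lt_le N j)).trans
      (pow_le_pow_left₀ hm.le (min_le_right _ _) _)
  have hexp : Real.exp (-R ^ 2) * Real.exp (-∑ k, gammaNorm Γ (L k u) ^ 2)
      ≤ Real.exp (∑ k ∈ F, -(gammaNorm Γ (y k) ^ 2 + gammaNorm Γ (L k u) ^ 2)) := by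
    rw [← Real.exp_add, Real.exp_le_exp, Finset.sum_neg_distrib, Finset.sum_add_distrib]
    have hL : ∑ k ∈ F, gammaNorm Γ (L k u) ^ 2 ≤ ∑ k, gammaNorm Γ (L k u) ^ 2 :=
      Finset.sum_le_sum_of_subset_of_nonneg (Finset.subset_univ F) fun _ _ _ => sq_nonneg _
    linarith
  calc min 1 Ct⁻¹ ^ N * Real.exp (-R ^ 2) * Real.exp (-∑ k, gammaNorm Γ (L k u) ^ 2)
      ≤ Ct⁻¹ ^ F.card *
          Real.exp (∑ k ∈ F, -(gammaNorm Γ (y k) ^ 2 + gammaNorm Γ (L k u) ^ 2)) := by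
        rw [mul_assoc]
        exact mul_le_mul hcoef hexp (by positivity) (by positivity)
    _ = ∏ k ∈ F, Ct⁻¹ * Real.exp (-(gammaNorm Γ (y k) ^ 2 + gammaNorm Γ (L k u) ^ 2)) := by
        rw [Finset.prod_mul_distrib, Finset.prod_const, Real.exp_sum]
    _ ≤ postDensity ρ L y j u :=
        Finset.prod_le_prod (fun _ _ => by positivity) hfactor

lemma le_postZ [MeasurableSpace X] {μ : Measure X} [IsProbabilityMeasure μ] (hΓ : Γ.PosDef)
    (hρ : IsNoiseDensity Γ ρ Lρ Cb Ct) (hL : ∀ k, Measurable (L k))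
    (hL2 : ∀ k, Integrable (fun u => gammaNorm Γ (L k u) ^ 2) μ)
    {y : Fin N → Fin d → ℝ} {j : ℕ} {R : ℝ}
    (hy : √(∑ k ∈ Finset.univ.filter (fun k : Fin N => (k : ℕ) < j), gammaNorm Γ (y k) ^ 2)
      ≤ R) :
    min 1 Ct⁻¹ ^ N * Real.exp (-R ^ 2) * Real.exp (-∫ u, ∑ k, gammaNorm Γ (L k u) ^ 2 ∂μ)
      ≤ postZ μ ρ L y j := by
  set c := min 1 Ct⁻¹ ^ N * Real.exp (-R ^ 2)
  have hc : 0 ≤ c := by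
    have := lt_min one_pos (inv_pos.2 hρ.Ct_pos)
    positivity
  set f : X → ℝ := fun u => -∑ k, gammaNorm Γ (L k u) ^ 2
  have hf : Integrable f μ := (integrable_finsetSum _ fun k _ => hL2 k).neg
  have hf_nonpos : ∀ u, f u ≤ 0 := fun u =>
    neg_nonpos.2 (Finset.sum_nonneg fun _ _ => sq_nonneg _)
  have hexp : Integrable (fun u => Real.exp (f u)) μ :=
    Integrable.of_bound (hf.aestronglyMeasurable.aemeasurable.exp.aestronglyMeasurable) 1
      (ae_of_all _ fun u => by
        rw [Real.norm_of_nonneg (Real.exp_pos _).le]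
        exact Real.exp_le_one_iff.2 (hf_nonpos u))
  have hyR : ∑ k ∈ Finset.univ.filter (fun k : Fin N => (k : ℕ) < j), gammaNorm Γ (y k) ^ 2
      ≤ R ^ 2 := (Real.sqrt_le_iff.1 hy).2
  rw [← integral_neg]
  calc c * Real.exp (∫ u, f u ∂μ) ≤ c * ∫ u, Real.exp (f u) ∂μ :=
        mul_le_mul_of_nonneg_left (exp_integral_le_integral_exp hf hexp) hc
    _ = ∫ u, c * Real.exp (f u) ∂μ := (integral_const_mul c _).symm
    _ ≤ postZ μ ρ L y j :=
        integral_mono (hexp.const_mul c) (integrable_postDensity hρ hL y j)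
          fun u => le_postDensity hΓ hρ hyR u

lemma W1_map_posteriorK_le [NormedAddCommGroup X] [MeasurableSpace X] [OpensMeasurableSpace X]
    {μ : Measure X} [IsProbabilityMeasure μ]
    (hρ : IsNoiseDensity Γ ρ Lρ Cb Ct) (hL : ∀ k, Measurable (L k))
    (hmom : Integrable (fun u => ‖u‖) μ) {y y' : Fin N → Fin d → ℝ} {j : ℕ} {z : ℝ}
    (hz : 0 < z) (hZ : z ≤ postZ μ ρ L y j) (hZ' : z ≤ postZ μ ρ L y' j)
    {S : X → X} (hS : Measurable S) {B : ℝ} (hSB : ∀ u, ‖S u‖ ≤ B * ‖u‖) :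
    W1 ((posteriorK μ ρ L y j).map S) ((posteriorK μ ρ L y' j).map S)
      ≤ Lρ * N * max 1 Cb ^ N * (1 + max 1 Cb ^ N / z) / z * B * (∫ u, ‖u‖ ∂μ)
        * √(∑ k ∈ Finset.univ.filter (fun k : Fin N => (k : ℕ) < j),
            gammaNorm Γ (y k - y' k) ^ 2) := by
  set M := max 1 Cb ^ N
  set K := Lρ * N * M
  set s := √(∑ k ∈ Finset.univ.filter (fun k : Fin N => (k : ℕ) < j),
    gammaNorm Γ (y k - y' k) ^ 2)
  have hmeas : ∀ w, Measurable fun u => postDensity ρ L w j u / postZ μ ρ L w j := fun w =>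
    (measurable_postDensity hρ.continuous.measurable hL w j).div_const _
  have hnormalized : ∀ w, z ≤ postZ μ ρ L w j → ∀ u,
      0 ≤ postDensity ρ L w j u / postZ μ ρ L w j ∧
        postDensity ρ L w j u / postZ μ ρ L w j ≤ M / z := fun w hw u =>
    ⟨div_nonneg (postDensity_pos hρ w j u).le (hz.trans_le hw).le,
      div_le_div₀ (by positivity) (postDensity_le hρ w j u) hz hw⟩
  have hdiff : ∀ u, |postDensity ρ L y j u / postZ μ ρ L y j
      - postDensity ρ L y' j u / postZ μ ρ L y' j| ≤ K * (1 + M / z) / z * s := fun u =>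
    (abs_div_sub_div_le hz hZ hZ'
      ((abs_of_pos (postDensity_pos hρ y' j u)).trans_le (postDensity_le hρ y' j u))
      (abs_postDensity_sub_le hρ y y' j u) (abs_postZ_sub_le hρ hL y y' j)).trans_eq
      (by field_simp; ring)
  have hW := W1_map_withDensity_le hmom (hmeas y) (hmeas y') (hnormalized y hZ)
    (hnormalized y' hZ') hdiff hS hSB
  exact hW.trans_eq (by ring)

end Posterior

theorem smoothing_stability_general
    {X : Type*} [NormedAddCommGroup X] [MeasurableSpace X] [BorelSpace X]
    {d N : ℕ}
    (Γ : Matrix (Fin d) (Fin d) ℝ) (hΓ : Γ.PosDef)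
    (ρ : (Fin d → ℝ) → ℝ) (Lρ Cb Ct : ℝ) (hρ : IsNoiseDensity Γ ρ Lρ Cb Ct)
    (μp : Measure X) [IsProbabilityMeasure μp]
    (hmom : Integrable (fun u => ‖u‖) μp)
    (T : ℝ)
    (S : ℝ → X → X) (hSmeas : Measurable fun p : ℝ × X => S p.1 p.2)
    (B : ℝ) (hB : 0 < B)
    (hSbd : ∀ t ∈ Set.Icc (0 : ℝ) T, ∀ u : X, ‖S t u‖ ≤ B * ‖u‖)
    (L : Fin N → X → Fin d → ℝ) (hLmeas : ∀ j, Measurable (L j))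
    (hL2 : ∀ j, Integrable (fun u => (gammaNorm Γ (L j u)) ^ 2) μp) :
    ∀ R > 0, ∃ C > 0,
      ∀ j : ℕ, 1 ≤ j → j ≤ N →
      ∀ y y' : Fin N → Fin d → ℝ,
        Real.sqrt (∑ k ∈ Finset.univ.filter (fun k : Fin N => (k : ℕ) < j),
            (gammaNorm Γ (y k)) ^ 2) ≤ R →
        Real.sqrt (∑ k ∈ Finset.univ.filter (fun k : Fin N => (k : ℕ) < j),
            (gammaNorm Γ (y' k)) ^ 2) ≤ R →
        (∀ τ ∈ Set.Icc (0 : ℝ) T,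
          W1 ((posteriorK μp ρ L y j).map (S τ)) ((posteriorK μp ρ L y' j).map (S τ))
            ≤ C * Real.sqrt (∑ k ∈ Finset.univ.filter (fun k : Fin N => (k : ℕ) < j),
                (gammaNorm Γ (y k - y' k)) ^ 2)) ∧
        ∀ t δt : ℝ, 0 ≤ t → 0 ≤ δt → t + δt ≤ T →
          (∫ τ in t..(t + δt),
              W1 ((posteriorK μp ρ L y j).map (S τ)) ((posteriorK μp ρ L y' j).map (S τ)))
            ≤ C * δt * Real.sqrt (∑ k ∈ Finset.univ.filter (fun k : Fin N => (k : ℕ) < j),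
                (gammaNorm Γ (y k - y' k)) ^ 2) := by
  intro R _
  set z := min 1 Ct⁻¹ ^ N * Real.exp (-R ^ 2) *
    Real.exp (-∫ u, ∑ k, gammaNorm Γ (L k u) ^ 2 ∂μp)
  have hz : 0 < z := by
    have := lt_min one_pos (inv_pos.2 hρ.Ct_pos)
    positivity
  set A := Lρ * N * max 1 Cb ^ N * (1 + max 1 Cb ^ N / z) / z * B * ∫ u, ‖u‖ ∂μp
  have hA : 0 ≤ A := by
    have := hρ.Lρ_pos
    positivity
  refine ⟨A + 1, by linarith, fun j _ _ y y' hy hy' => ?_⟩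
  set s := √(∑ k ∈ Finset.univ.filter (fun k : Fin N => (k : ℕ) < j),
    gammaNorm Γ (y k - y' k) ^ 2)
  have hW : ∀ τ ∈ Set.Icc (0 : ℝ) T, W1 ((posteriorK μp ρ L y j).map (S τ))
      ((posteriorK μp ρ L y' j).map (S τ)) ≤ (A + 1) * s := fun τ hτ =>
    (W1_map_posteriorK_le hρ hLmeas hmom hz (le_postZ hΓ hρ hLmeas hL2 hy)
      (le_postZ hΓ hρ hLmeas hL2 hy') (hSmeas.comp (measurable_const.prodMk measurable_id))
      (hSbd τ hτ)).trans (mul_le_mul_of_nonneg_right (le_add_of_nonneg_right zero_le_one)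
        (Real.sqrt_nonneg _))
  exact ⟨hW, fun t δt ht hδt htT =>
    (intervalIntegral_le_of_le_const (by linarith) (by positivity)
      fun τ hτ => hW τ ⟨ht.trans hτ.1, hτ.2.trans htT⟩).trans_eq (by ring)⟩

/-- **Lemma 4.6: stability of the smoothing/prediction distributions
`ν^{y_{1:j}}_τ = (S_τ)_# μ^{y_{1:j}}` with respect to the measurements.** -/
theorem smoothing_stability
    {X : Type*} [NormedAddCommGroup X] [NormedSpace ℝ X] [CompleteSpace X]
    [TopologicalSpace.SeparableSpace X] [MeasurableSpace X] [BorelSpace X]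
    {d N : ℕ} (hN : 0 < N)
    (Γ : Matrix (Fin d) (Fin d) ℝ) (hΓ : Γ.PosDef)
    (ρ : (Fin d → ℝ) → ℝ) (Lρ Cb Ct : ℝ) (hρ : IsNoiseDensity Γ ρ Lρ Cb Ct)
    (μp : Measure X) [IsProbabilityMeasure μp]
    (hmom : Integrable (fun u => ‖u‖) μp)
    (T : ℝ) (hT : 0 < T)
    (ts : Fin (N + 1) → ℝ) (hts : StrictMono ts)
    (hts0 : ts 0 = 0) (htsN : ts (Fin.last N) = T)
    (S : ℝ → X → X) (hSmeas : Measurable fun p : ℝ × X => S p.1 p.2)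
    (B : ℝ) (hB : 0 < B)
    (hSbd : ∀ t ∈ Set.Icc (0 : ℝ) T, ∀ u : X, ‖S t u‖ ≤ B * ‖u‖)
    (L : Fin N → X → Fin d → ℝ) (hLmeas : ∀ j, Measurable (L j))
    (hL2 : ∀ j, Integrable (fun u => (gammaNorm Γ (L j u)) ^ 2) μp) :
    ∀ R > 0, ∃ C > 0,
      ∀ j : ℕ, 1 ≤ j → j ≤ N →
      ∀ y y' : Fin N → Fin d → ℝ,
        Real.sqrt (∑ k ∈ Finset.univ.filter (fun k : Fin N => (k : ℕ) < j),
            (gammaNorm Γ (y k)) ^ 2) ≤ R →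
        Real.sqrt (∑ k ∈ Finset.univ.filter (fun k : Fin N => (k : ℕ) < j),
            (gammaNorm Γ (y' k)) ^ 2) ≤ R →
        (∀ τ ∈ Set.Icc (0 : ℝ) T,
          W1 ((posteriorK μp ρ L y j).map (S τ)) ((posteriorK μp ρ L y' j).map (S τ))
            ≤ C * Real.sqrt (∑ k ∈ Finset.univ.filter (fun k : Fin N => (k : ℕ) < j),
                (gammaNorm Γ (y k - y' k)) ^ 2)) ∧
        ∀ t δt : ℝ, 0 ≤ t → 0 ≤ δt → t + δt ≤ T →
          (∫ τ in t..(t + δt),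
              W1 ((posteriorK μp ρ L y j).map (S τ)) ((posteriorK μp ρ L y' j).map (S τ)))
            ≤ C * δt * Real.sqrt (∑ k ∈ Finset.univ.filter (fun k : Fin N => (k : ℕ) < j),
                (gammaNorm Γ (y k - y' k)) ^ 2) :=
  smoothing_stability_general Γ hΓ ρ Lρ Cb Ct hρ μp hmom T S hSmeas B hB hSbd L hLmeas hL2
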